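/- Let G be a trivalent, 2-edge-connected finite graph of genus g = h¹(G) (so |V| = 2g−2 and |E| = 3g−3). Then the rank of the graph curve matroid M_G equals g − 1, i.e., half the number of vertices. -/

import Mathlib

/-!
Trivalence gives `3|V| = 2|E|`, hence `|V| = 2g - 2`. Write `ρ(A) = r*(δ(A))`. Every edge set has
`r* ≤ |E| - |V| + 1 = g`, so a nonempty independent set has fewer than `g` vertices.
Conversely, a double count using 2-edge-connectivity shows `|T| + 2 ≤ 2ρ(T)` for nonempty `T`.
Fix a maximal independent set `I`. Each vertex outside `I` lies in a tight set `S`, one with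
`ρ(S) = |S ∩ I| + 1` (take the circuit created by adding the vertex); by submodularity of `ρ`,
two intersecting tight sets have a tight union. So the maximal tight sets are disjoint and cover
`Iᶜ`, and each satisfies `|S| ≤ 2|S ∩ I|`. Hence `|Iᶜ| ≤ |I|`, that is `|I| ≥ g - 1`.
-/

/-- A finite undirected multigraph on vertex type `V` with edge type `E`:
each edge has an unordered pair of endpoints (possibly a loop). -/
structure Multigraph (V E : Type*) where
  ends : E → Sym2 V

namespace Multigraph

variable {V E : Type*} (G : Multigraph V E)

/-- `δ(A)`: the set of edges incident to at least one vertex of `A`. -/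
def inc (A : Set V) : Set E := {e | ∃ v ∈ A, v ∈ G.ends e}

/-- Number of connected components of the spanning subgraph of `G`
with edge set `B` (on the full vertex set `V`). -/
noncomputable def numComponentsEdges (B : Set E) : ℕ :=
  Nat.card (Quot (fun u v : V => ∃ e ∈ B, G.ends e = s(u, v)))

/-- Number of connected components `ω(S)` of the subgraph of `G` induced on `S`. -/
noncomputable def numComponentsSub (S : Set V) : ℕ :=
  Nat.card (Quot (fun x y : S => ∃ e, G.ends e = s(x.1, y.1)))

/-- Rank function of the cycle (graphic) matroid of `G`:
`r(B) = |V| - (number of components of (V, B))`. -/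
noncomputable def cycleRank (B : Set E) : ℕ :=
  Nat.card V - G.numComponentsEdges B

/-- Rank function `r*` of the bond (cographic) matroid of `G`:
`r*(B) = |B| + r(E - B) - r(E)`. -/
noncomputable def bondRank (B : Set E) : ℕ :=
  B.ncard + G.cycleRank Bᶜ - G.cycleRank Set.univ

/-- `G` is connected. -/
def Connected : Prop := G.numComponentsEdges Set.univ = 1

/-- `G` is 2-edge-connected: it is connected and deleting any single edge
leaves it connected. -/
def TwoEdgeConnected : Prop :=
  G.Connected ∧ ∀ e : E, G.numComponentsEdges {e}ᶜ = 1

/-- `G` is 2-vertex-connected: it is connected and deleting any single vertex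
leaves it connected. -/
def TwoVertexConnected : Prop :=
  G.Connected ∧ ∀ v : V, G.numComponentsSub {v}ᶜ = 1

/-- `G` has no loops. -/
def Loopless : Prop := ∀ e : E, ¬ (G.ends e).IsDiag

open Classical in
/-- The degree of a vertex, with loops counting twice. -/
noncomputable def degree [Fintype E] (v : V) : ℕ :=
  ∑ e : E, (if G.ends e = s(v, v) then 2 else if v ∈ G.ends e then 1 else 0)

/-- `G` is trivalent: every vertex has degree `3`. -/
def Trivalent [Fintype E] : Prop := ∀ v : V, G.degree v = 3

/-- `A ⊆ V` is the vertex set of a cycle `v₁, …, vₙ, v₁` of `G`: there are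
pairwise distinct vertices `f 0, …, f (n-1)` with range `A` and pairwise
distinct edges joining cyclically consecutive vertices. -/
def IsCycleSet (A : Set V) : Prop :=
  ∃ n : ℕ, 0 < n ∧ ∃ f : ZMod n → V, Function.Injective f ∧ Set.range f = A ∧
    ∃ e : ZMod n → E, Function.Injective e ∧ ∀ i, G.ends (e i) = s(f i, f (i + 1))

/-- The subgraph induced on `A` contains a cycle. -/
def Cyclic (A : Set V) : Prop := ∃ C ⊆ A, G.IsCycleSet C

/-- The subgraph induced on `A` is acyclic (a forest). -/
def Acyclic (A : Set V) : Prop := ¬ G.Cyclic A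

/-- `A` is a circuit of the graph curve matroid `M_G`: `A` is nonempty,
`r*(δ(A)) ≤ |A|`, and no proper nonempty subset `A'` satisfies `r*(δ(A')) ≤ |A'|`. -/
noncomputable def IsCircuitMG (A : Set V) : Prop :=
  A.Nonempty ∧ G.bondRank (G.inc A) ≤ A.ncard ∧
    ∀ A' : Set V, A' ⊂ A → A'.Nonempty → A'.ncard < G.bondRank (G.inc A')

/-- `A` is dependent in the graph curve matroid `M_G`, i.e. contains a circuit. -/
noncomputable def DepMG (A : Set V) : Prop := ∃ C ⊆ A, G.IsCircuitMG C

/-- `A` is independent in the graph curve matroid `M_G`. -/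
noncomputable def IndepMG (A : Set V) : Prop := ¬ G.DepMG A

/-- The rank function of the graph curve matroid `M_G`:
the maximal cardinality of an independent subset. -/
noncomputable def rankMG (A : Set V) : ℕ :=
  sSup {n | ∃ I ⊆ A, G.IndepMG I ∧ I.ncard = n}

/-- `B` is a basis of the graph curve matroid `M_G`:
a maximal independent set. -/
noncomputable def IsBasisMG (B : Set V) : Prop :=
  G.IndepMG B ∧ ∀ I : Set V, G.IndepMG I → B ⊆ I → I = B

end Multigraph

open Relation

namespace Nat

variable {α : Type*} {r s : α → α → Prop}

theorem card_quot_of_forall_not (h : ∀ x y, ¬ r x y) : Nat.card (Quot r) = Nat.card α := by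
  refine (Nat.card_eq_of_bijective (Quot.mk r) ⟨?_, Quot.mk_surjective⟩).symm
  exact Function.LeftInverse.injective (g := Quot.lift id fun x y hxy => (h x y hxy).elim)
    fun _ => rfl

variable [Finite α]

theorem card_quot_le_of_forall_eqvGen (h : ∀ x y, r x y → EqvGen s x y) :
    Nat.card (Quot s) ≤ Nat.card (Quot r) :=
  Nat.card_le_card_of_surjective _ <|
    (Quot.surjective_lift fun x y hxy => Quot.eqvGen_sound (h x y hxy)).2 Quot.mk_surjective

theorem card_quot_le_card (r : α → α → Prop) : Nat.card (Quot r) ≤ Nat.card α :=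
  Nat.card_le_card_of_surjective _ Quot.mk_surjective

variable (a b : α)

theorem card_quot_le_card_quot_or_pair_add_one :
    Nat.card (Quot r) ≤ Nat.card (Quot fun x y => r x y ∨ s(x, y) = s(a, b)) + 1 := by
  classical
  -- `ψ` merges the classes of `a` and `b`, so its range misses at most the class of `b`
  let merge : Quot r → Quot r := fun q => if q = Quot.mk r b then Quot.mk r a else q
  let ψ : Quot (fun x y => r x y ∨ s(x, y) = s(a, b)) → Quot r :=
    Quot.lift (fun x => merge (Quot.mk r x)) <| by
      rintro x y (hxy | hxy)
      · rw [Quot.sound hxy]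
      · rcases Sym2.eq_iff.1 hxy with ⟨rfl, rfl⟩ | ⟨rfl, rfl⟩ <;> simp [merge]
  have hcover : Set.univ ⊆ insert (Quot.mk r b) (Set.range ψ) := by
    rintro q -
    by_cases hq : q = Quot.mk r b
    · exact Or.inl hq
    · obtain ⟨x, rfl⟩ := Quot.exists_rep q
      exact Or.inr ⟨Quot.mk _ x, if_neg hq⟩
  calc Nat.card (Quot r) = (Set.univ : Set (Quot r)).ncard := Set.ncard_univ _ |>.symm
    _ ≤ (Set.range ψ).ncard + 1 :=
      (Set.ncard_le_ncard hcover).trans (Set.ncard_insert_le _ _)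
    _ ≤ _ := by
      rw [← Nat.card_coe_set_eq]
      exact Nat.add_le_add_right (Finite.card_range_le ψ) 1

theorem card_quot_or_pair_lt (h : ¬ EqvGen r a b) :
    Nat.card (Quot fun x y => r x y ∨ s(x, y) = s(a, b)) < Nat.card (Quot r) := by
  let π : Quot r → Quot fun x y => r x y ∨ s(x, y) = s(a, b) :=
    Quot.lift (Quot.mk _) fun x y hxy => Quot.sound (Or.inl hxy)
  have hπ : Function.Surjective π := (Quot.surjective_lift _).2 Quot.mk_surjective
  by_contra! hle
  have hab : π (Quot.mk r a) = π (Quot.mk r b) := Quot.sound (Or.inr rfl)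
  exact h (Quot.eqvGen_exact ((hπ.bijective_of_nat_card_le hle).1 hab))

theorem card_quot_or_pair_of_eqvGen (h : EqvGen r a b) :
    Nat.card (Quot fun x y => r x y ∨ s(x, y) = s(a, b)) = Nat.card (Quot r) := by
  refine le_antisymm (card_quot_le_of_forall_eqvGen fun x y hxy => .rel x y (Or.inl hxy))
    (card_quot_le_of_forall_eqvGen ?_)
  rintro x y (hxy | hxy)
  · exact .rel x y hxy
  · rcases Sym2.eq_iff.1 hxy with ⟨rfl, rfl⟩ | ⟨rfl, rfl⟩
    exacts [h, h.symm]

end Nat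

theorem Set.ncard_le_ncard_of_pairwiseDisjoint {α : Type*} [Finite α] {𝓜 : Set (Set α)}
    (hdisj : 𝓜.PairwiseDisjoint id) {A B : Set α} (hA : A ⊆ ⋃₀ 𝓜)
    (h : ∀ M ∈ 𝓜, (M ∩ A).ncard ≤ (M ∩ B).ncard) : A.ncard ≤ B.ncard := by
  have hsum (C : Set α) : (⋃ M ∈ 𝓜, M ∩ C).ncard = ∑ᶠ M ∈ 𝓜, (M ∩ C).ncard :=
    Set.Finite.ncard_biUnion (Set.toFinite 𝓜) (fun _ _ => Set.toFinite _)
      (hdisj.mono fun _ => Set.inter_subset_left)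
  have hcover : ⋃ M ∈ 𝓜, M ∩ A = A := by
    rw [← Set.iUnion₂_inter, ← Set.sUnion_eq_biUnion, Set.inter_eq_right.2 hA]
  calc A.ncard = ∑ᶠ M ∈ 𝓜, (M ∩ A).ncard := by rw [← hsum, hcover]
    _ ≤ ∑ᶠ M ∈ 𝓜, (M ∩ B).ncard := by
      obtain ⟨𝓕, rfl⟩ := (Set.toFinite 𝓜).exists_finset_coe
      simp only [finsum_mem_coe_finset]
      exact Finset.sum_le_sum h
    _ = (⋃ M ∈ 𝓜, M ∩ B).ncard := (hsum B).symm
    _ ≤ B.ncard := Set.ncard_le_ncard (Set.iUnion₂_subset fun _ _ => Set.inter_subset_right)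

theorem Set.ncard_mul_le_ncard_mul {α β : Type*} [Finite α] [Finite β] {s : Set α} {t : Set β}
    {r : α → β → Prop} {m n : ℕ} (hm : ∀ a ∈ s, m ≤ {b ∈ t | r a b}.ncard)
    (hn : ∀ b ∈ t, {a ∈ s | r a b}.ncard ≤ n) : s.ncard * m ≤ t.ncard * n := by
  classical
  obtain ⟨s, rfl⟩ := s.toFinite.exists_finset_coe
  obtain ⟨t, rfl⟩ := t.toFinite.exists_finset_coe
  simp only [Set.ncard_coe_finset]
  refine Finset.card_mul_le_card_mul r (fun a ha => ?_) (fun b hb => ?_)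
  · simpa [Finset.bipartiteAbove, ← Finset.coe_filter] using hm a ha
  · simpa [Finset.bipartiteBelow, ← Finset.coe_filter] using hn b hb

namespace Multigraph

variable {V E : Type*} (G : Multigraph V E)

def Adj (B : Set E) (u v : V) : Prop := ∃ e ∈ B, G.ends e = s(u, v)

def boundary (K : Set V) : Set E :=
  {e | (∃ v ∈ G.ends e, v ∈ K) ∧ ∃ v ∈ G.ends e, v ∉ K}

def innerEdges (T : Set V) : Set E := {e | ∀ v ∈ G.ends e, v ∈ T}

theorem numComponentsEdges_eq (B : Set E) :
    G.numComponentsEdges B = Nat.card (Quot (G.Adj B)) := rfl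

theorem adj_insert_iff {B : Set E} {e : E} {u v : V} :
    G.Adj (insert e B) u v ↔ G.ends e = s(u, v) ∨ G.Adj B u v := by
  simp only [Adj, Set.mem_insert_iff, or_and_right, exists_or, exists_eq_left]

theorem numComponentsEdges_empty : G.numComponentsEdges ∅ = Nat.card V :=
  Nat.card_quot_of_forall_not fun _ _ ⟨_, he, _⟩ => he

theorem numComponentsEdges_insert {B : Set E} {e : E} {a b : V} (hab : G.ends e = s(a, b)) :
    G.numComponentsEdges (insert e B) =
      Nat.card (Quot fun x y => G.Adj B x y ∨ s(x, y) = s(a, b)) := by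
  have : G.Adj (insert e B) = fun x y => G.Adj B x y ∨ s(x, y) = s(a, b) := by
    ext x y
    rw [adj_insert_iff, hab, eq_comm, or_comm]
  rw [numComponentsEdges_eq, this]

section Finite

variable [Finite V]

theorem numComponentsEdges_le_card (B : Set E) : G.numComponentsEdges B ≤ Nat.card V :=
  Nat.card_quot_le_card _

theorem numComponentsEdges_le_insert_add_one (B : Set E) (e : E) :
    G.numComponentsEdges B ≤ G.numComponentsEdges (insert e B) + 1 := by
  induction hab : G.ends e using Sym2.ind with | _ a b => ?_
  rw [G.numComponentsEdges_insert hab]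
  exact Nat.card_quot_le_card_quot_or_pair_add_one a b

theorem numComponentsEdges_le_union_add_ncard [Finite E] (B C : Set E) :
    G.numComponentsEdges B ≤ G.numComponentsEdges (B ∪ C) + C.ncard := by
  induction C, C.toFinite using Set.Finite.induction_on with
  | empty => simp
  | @insert e C heC hC ih =>
    rw [Set.union_insert, Set.ncard_insert_of_notMem heC hC]
    have := G.numComponentsEdges_le_insert_add_one (B ∪ C) e
    omega

theorem numComponentsEdges_add_insert_le {B C : Set E} (hCB : C ⊆ B) (e : E) :
    G.numComponentsEdges B + G.numComponentsEdges (insert e C) ≤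
      G.numComponentsEdges C + G.numComponentsEdges (insert e B) := by
  induction hab : G.ends e using Sym2.ind with | _ a b => ?_
  rw [G.numComponentsEdges_insert hab, G.numComponentsEdges_insert hab,
    numComponentsEdges_eq, numComponentsEdges_eq]
  by_cases hB : EqvGen (G.Adj B) a b
  · rw [Nat.card_quot_or_pair_of_eqvGen a b hB]
    have := Nat.card_quot_le_of_forall_eqvGen (r := G.Adj C)
      (s := fun x y => G.Adj C x y ∨ s(x, y) = s(a, b)) fun x y h => .rel x y (Or.inl h)
    omega
  · have hC : ¬ EqvGen (G.Adj C) a b := fun h =>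
      hB (h.mono fun _ _ ⟨e, he, hends⟩ => ⟨e, hCB he, hends⟩)
    have := Nat.card_quot_or_pair_lt a b hC
    have := Nat.card_quot_le_card_quot_or_pair_add_one (r := G.Adj B) a b
    omega

theorem numComponentsEdges_add_union_le [Finite E] {B C : Set E} (hCB : C ⊆ B) (D : Set E) :
    G.numComponentsEdges B + G.numComponentsEdges (C ∪ D) ≤
      G.numComponentsEdges C + G.numComponentsEdges (B ∪ D) := by
  induction D, D.toFinite using Set.Finite.induction_on with
  | empty => simp [add_comm]
  | @insert e D _ _ ih =>
    rw [Set.union_insert, Set.union_insert]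
    have := G.numComponentsEdges_add_insert_le (Set.union_subset_union_left D hCB) e
    omega

theorem numComponentsEdges_add_le_union_add_inter [Finite E] (X Y : Set E) :
    G.numComponentsEdges X + G.numComponentsEdges Y ≤
      G.numComponentsEdges (X ∪ Y) + G.numComponentsEdges (X ∩ Y) := by
  have := G.numComponentsEdges_add_union_le (Set.inter_subset_right : X ∩ Y ⊆ Y) (X \ Y)
  rw [Set.inter_union_sdiff, Set.union_sdiff_self, Set.union_comm Y] at this
  omega

theorem two_le_numComponentsEdges_of_disjoint_boundary {K : Set V} (hK : K.Nonempty)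
    (hKc : Kᶜ.Nonempty) {B : Set E} (hB : Disjoint B (G.boundary K)) :
    2 ≤ G.numComponentsEdges B := by
  classical
  have hresp : ∀ x y, G.Adj B x y → decide (x ∈ K) = decide (y ∈ K) := by
    rintro x y ⟨e, he, hends⟩
    by_contra hxy
    refine Set.disjoint_left.1 hB he ?_
    have hx : x ∈ G.ends e := hends ▸ Sym2.mem_mk_left x y
    have hy : y ∈ G.ends e := hends ▸ Sym2.mem_mk_right x y
    by_cases hxK : x ∈ K
    · exact ⟨⟨x, hx, hxK⟩, y, hy, by simpa [hxK] using hxy⟩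
    · exact ⟨⟨y, hy, by simpa [hxK] using hxy⟩, x, hx, hxK⟩
  have hsurj : Function.Surjective (Quot.lift _ hresp) := by
    rintro (_ | _)
    · exact ⟨Quot.mk _ hKc.some, by simpa using hKc.some_mem⟩
    · exact ⟨Quot.mk _ hK.some, by simpa using hK.some_mem⟩
  simpa [numComponentsEdges_eq] using Nat.card_le_card_of_surjective _ hsurj

end Finite

open Classical in
theorem sum_degree_summand (z : Sym2 V) (T : Finset V) :
    ∑ v ∈ T, (if z = s(v, v) then 2 else if v ∈ z then 1 else 0) =
      (if ∀ v ∈ z, v ∈ T then 1 else 0) + (if ∃ v ∈ T, v ∈ z then 1 else 0) := by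
  induction z using Sym2.ind with | _ a b => ?_
  have hw : ∀ v, (if s(a, b) = s(v, v) then 2 else if v ∈ s(a, b) then 1 else 0) =
      (if a = v then 1 else 0) + (if b = v then 1 else 0) := by
    intro v
    by_cases ha : a = v <;> by_cases hb : b = v <;> simp [ha, hb, eq_comm]
  rw [Finset.sum_congr rfl fun v _ => hw v, Finset.sum_add_distrib, Finset.sum_ite_eq,
    Finset.sum_ite_eq]
  by_cases ha : a ∈ T <;> by_cases hb : b ∈ T <;> simp [ha, hb, and_or_left, exists_or]

theorem sum_degree [Fintype E] (T : Finset V) :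
    ∑ v ∈ T, G.degree v = (G.innerEdges T).ncard + (G.inc T).ncard := by
  classical
  unfold degree
  rw [Finset.sum_comm]
  simp only [sum_degree_summand, Finset.sum_add_distrib, Finset.sum_boole]
  simp [innerEdges, inc, Set.ncard_eq_toFinset_card']

variable {G}

theorem inc_mono {A A' : Set V} (h : A ⊆ A') : G.inc A ⊆ G.inc A' :=
  fun _ ⟨v, hv, hve⟩ => ⟨v, h hv, hve⟩

theorem inc_union (A A' : Set V) : G.inc (A ∪ A') = G.inc A ∪ G.inc A' := by
  ext e
  simp only [inc, Set.mem_union, Set.mem_ofPred_eq, or_and_right, exists_or]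

theorem inc_inter_subset (A A' : Set V) : G.inc (A ∩ A') ⊆ G.inc A ∩ G.inc A' :=
  Set.subset_inter (inc_mono Set.inter_subset_left) (inc_mono Set.inter_subset_right)

theorem innerEdges_subset_inc (T : Set V) : G.innerEdges T ⊆ G.inc T := fun e he => by
  induction h : G.ends e using Sym2.ind with
  | _ a b => exact ⟨a, he a (h ▸ Sym2.mem_mk_left a b), h ▸ Sym2.mem_mk_left a b⟩

section Finite

variable [Finite V] [Finite E]

theorem Connected.bondRank_add_numComponentsEdges_compl (hc : G.Connected) (B : Set E) :
    G.bondRank B + G.numComponentsEdges Bᶜ = B.ncard + 1 := by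
  have hB := G.numComponentsEdges_le_card Bᶜ
  have hV := G.numComponentsEdges_le_card Set.univ
  have hBc := G.numComponentsEdges_le_union_add_ncard Bᶜ B
  rw [Set.compl_union_self] at hBc
  unfold Connected at hc
  unfold bondRank cycleRank
  omega

theorem Connected.bondRank_mono (hc : G.Connected) {B B' : Set E} (h : B ⊆ B') :
    G.bondRank B ≤ G.bondRank B' := by
  have hB := hc.bondRank_add_numComponentsEdges_compl B
  have hB' := hc.bondRank_add_numComponentsEdges_compl B'
  have hcard := Set.ncard_sdiff_add_ncard_of_subset h (Set.toFinite B')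
  have hcomp := G.numComponentsEdges_le_union_add_ncard B'ᶜ (B' \ B)
  have hBc : B'ᶜ ∪ (B' \ B) = Bᶜ := by
    rw [Set.sdiff_eq, Set.union_inter_distrib_left, Set.compl_union_self, Set.univ_inter,
      Set.union_eq_right.2 (Set.compl_subset_compl.2 h)]
  rw [hBc] at hcomp
  omega

theorem Connected.bondRank_union_add_inter_le (hc : G.Connected) (B B' : Set E) :
    G.bondRank (B ∪ B') + G.bondRank (B ∩ B') ≤ G.bondRank B + G.bondRank B' := by
  have hU := hc.bondRank_add_numComponentsEdges_compl (B ∪ B')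
  have hI := hc.bondRank_add_numComponentsEdges_compl (B ∩ B')
  have hB := hc.bondRank_add_numComponentsEdges_compl B
  have hB' := hc.bondRank_add_numComponentsEdges_compl B'
  have hsuper := G.numComponentsEdges_add_le_union_add_inter Bᶜ B'ᶜ
  rw [← Set.compl_inter, ← Set.compl_union] at hsuper
  have hcard := Set.ncard_union_add_ncard_inter B B' (Set.toFinite B) (Set.toFinite B')
  omega

theorem Connected.bondRank_add_card_le (hc : G.Connected) (B : Set E) :
    G.bondRank B + Nat.card V ≤ Nat.card E + 1 := by
  have hB := hc.bondRank_add_numComponentsEdges_compl B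
  have hV := G.numComponentsEdges_le_union_add_ncard ∅ Bᶜ
  rw [Set.empty_union, numComponentsEdges_empty] at hV
  have hcard := Set.ncard_add_ncard_compl B (Set.toFinite B) (Set.toFinite Bᶜ)
  omega

theorem Connected.bondRank_inc_union_add_inter_le (hc : G.Connected) (A A' : Set V) :
    G.bondRank (G.inc (A ∪ A')) + G.bondRank (G.inc (A ∩ A')) ≤
      G.bondRank (G.inc A) + G.bondRank (G.inc A') := by
  rw [inc_union]
  have := hc.bondRank_mono (inc_inter_subset (G := G) A A')
  have := hc.bondRank_union_add_inter_le (G.inc A) (G.inc A')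
  omega

theorem TwoEdgeConnected.two_le_ncard_boundary (h2 : G.TwoEdgeConnected) {K : Set V}
    (hK : K.Nonempty) (hKc : Kᶜ.Nonempty) : 2 ≤ (G.boundary K).ncard := by
  have hcut : ∀ B : Set E, G.numComponentsEdges B = 1 → ¬ Disjoint B (G.boundary K) :=
    fun B hB hdisj => by
      have := G.two_le_numComponentsEdges_of_disjoint_boundary hK hKc hdisj
      omega
  obtain ⟨e, -, he⟩ := Set.not_disjoint_iff.1 (hcut _ h2.1)
  obtain ⟨e', he'e, he'⟩ := Set.not_disjoint_iff.1 (hcut _ (h2.2 e))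
  exact (Set.one_lt_ncard_iff).2 ⟨e, e', he, he', Ne.symm he'e⟩

end Finite

theorem Trivalent.three_mul_ncard [Finite V] [Fintype E] (h3 : G.Trivalent) (T : Set V) :
    3 * T.ncard = (G.innerEdges T).ncard + (G.inc T).ncard := by
  have := G.sum_degree T.toFinite.toFinset
  rw [Finset.sum_congr rfl fun v _ => h3 v, Finset.sum_const, smul_eq_mul,
    Set.Finite.coe_toFinset, ← Set.ncard_eq_toFinset_card] at this
  rw [mul_comm, this]

theorem Trivalent.three_mul_card [Finite V] [Fintype E] (h3 : G.Trivalent) :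
    3 * Nat.card V = 2 * Nat.card E := by
  have hinner : G.innerEdges Set.univ = Set.univ := Set.eq_univ_of_forall fun _ _ _ => trivial
  have hinc : G.inc Set.univ = Set.univ :=
    Set.univ_subset_iff.1 (hinner ▸ G.innerEdges_subset_inc _)
  have := h3.three_mul_ncard Set.univ
  rw [hinner, hinc, Set.ncard_univ, Set.ncard_univ] at this
  omega

/-- Double counting: in the graph without the edges at `T`, each component avoiding `T` is left
by at least two edges (2-edge-connectivity), none of them inside `T`, and each such edge leaves
only one of these components. -/
theorem TwoEdgeConnected.two_mul_ncard_compl_image_le [Finite V] [Finite E]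
    (h2 : G.TwoEdgeConnected) {T : Set V} (hT : T.Nonempty) :
    2 * (Quot.mk (G.Adj (G.inc T)ᶜ) '' T)ᶜ.ncard ≤ (G.inc T \ G.innerEdges T).ncard := by
  set r := G.Adj (G.inc T)ᶜ
  set Q := (Quot.mk r '' T)ᶜ
  have hQ : ∀ q ∈ Q, ∀ v, Quot.mk r v = q → v ∉ T := fun _ hq v hv ht => hq ⟨v, ht, hv⟩
  let R : Quot r → E → Prop := fun q e => ∃ v ∈ G.ends e, Quot.mk r v = q
  have hm : ∀ q ∈ Q, 2 ≤ {e ∈ G.inc T \ G.innerEdges T | R q e}.ncard := by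
    intro q hq
    obtain ⟨v, hv⟩ := Quot.exists_rep q
    obtain ⟨t, ht⟩ := hT
    refine (h2.two_le_ncard_boundary (K := {v | Quot.mk r v = q}) ⟨v, hv⟩
      ⟨t, fun htq => hQ q hq t htq ht⟩).trans (Set.ncard_le_ncard ?_)
    rintro e ⟨⟨u, hu, huq⟩, w, hw, hwq⟩
    have hinc : e ∈ G.inc T := by
      by_contra he
      have huw : u ≠ w := by rintro rfl; exact hwq huq
      exact hwq (huq ▸ (Quot.sound ⟨e, he, ((Sym2.mem_and_mem_iff huw).1 ⟨hu, hw⟩)⟩).symm)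
    exact ⟨⟨hinc, fun hin => hQ q hq u huq (hin u hu)⟩, u, hu, huq⟩
  have hn : ∀ e ∈ G.inc T \ G.innerEdges T, {q ∈ Q | R q e}.ncard ≤ 1 := by
    rintro e ⟨⟨u, huT, hu⟩, -⟩
    obtain ⟨w, hw⟩ := Sym2.mem_iff_exists.1 hu
    have hmem : ∀ q ∈ {q ∈ Q | R q e}, q = Quot.mk r w := by
      rintro q ⟨hq, v, hv, rfl⟩
      rw [hw, Sym2.mem_iff] at hv
      rcases hv with rfl | rfl
      · exact (hQ _ hq v rfl huT).elim
      · rfl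
    exact (Set.ncard_le_one).2 fun q hq q' hq' => (hmem q hq).trans (hmem q' hq').symm
  simpa [mul_comm] using Set.ncard_mul_le_ncard_mul hm hn

theorem ncard_add_two_le_two_mul_bondRank_inc [Finite V] [Fintype E] (h3 : G.Trivalent)
    (h2 : G.TwoEdgeConnected) {T : Set V} (hT : T.Nonempty) :
    T.ncard + 2 ≤ 2 * G.bondRank (G.inc T) := by
  have hcomp : G.numComponentsEdges (G.inc T)ᶜ ≤
      T.ncard + (Quot.mk (G.Adj (G.inc T)ᶜ) '' T)ᶜ.ncard := by
    rw [numComponentsEdges_eq, ← Set.ncard_add_ncard_compl (Quot.mk _ '' T)]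
    exact Nat.add_le_add_right (Set.ncard_image_le) _
  have hQ := h2.two_mul_ncard_compl_image_le hT
  have hX := Set.ncard_sdiff_add_ncard_of_subset (innerEdges_subset_inc (G := G) T)
  have hdeg := h3.three_mul_ncard T
  have hrank := h2.1.bondRank_add_numComponentsEdges_compl (G.inc T)
  omega

theorem exists_isCircuitMG_subset [Finite V] {A : Set V} (hA : A.Nonempty)
    (h : G.bondRank (G.inc A) ≤ A.ncard) : ∃ C ⊆ A, G.IsCircuitMG C := by
  obtain ⟨C, hC⟩ := Set.Finite.exists_minimal
    (s := {A' | A' ⊆ A ∧ A'.Nonempty ∧ G.bondRank (G.inc A') ≤ A'.ncard}) (Set.toFinite _)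
    ⟨A, subset_rfl, hA, h⟩
  obtain ⟨hCA, hCne, hCrank⟩ := hC.prop
  refine ⟨C, hCA, hCne, hCrank, fun A' hA'C hA' => ?_⟩
  by_contra! hle
  exact hA'C.not_subset (hC.le_of_le ⟨hA'C.subset.trans hCA, hA', hle⟩ hA'C.subset)

theorem indepMG_empty : G.IndepMG ∅ :=
  fun ⟨_, hC, hCne, _⟩ => hCne.ne_empty (Set.subset_empty_iff.1 hC)

theorem indepMG_iff [Finite V] {I : Set V} :
    G.IndepMG I ↔ ∀ A ⊆ I, A.Nonempty → A.ncard < G.bondRank (G.inc A) := by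
  refine ⟨fun hI A hAI hA => ?_, fun h ⟨C, hCI, hC⟩ => (h C hCI hC.1).not_ge hC.2.1⟩
  by_contra! hle
  obtain ⟨C, hCA, hC⟩ := exists_isCircuitMG_subset hA hle
  exact hI ⟨C, hCA.trans hAI, hC⟩

theorem Connected.ncard_add_card_le_of_indepMG [Finite V] [Finite E] (hc : G.Connected)
    {I : Set V} (hI : G.IndepMG I) (hne : I.Nonempty) : I.ncard + Nat.card V ≤ Nat.card E := by
  have := indepMG_iff.1 hI I subset_rfl hne
  have := hc.bondRank_add_card_le (G.inc I)
  omega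

/-- `S` is tight for `I` when `r*(δ(S))` takes the least value `|S ∩ I| + 1` that
`ncard_inter_add_one_le_bondRank_inc` allows for independent `I`. -/
def IsTight (G : Multigraph V E) (I S : Set V) : Prop :=
  S.Nonempty ∧ G.bondRank (G.inc S) ≤ (S ∩ I).ncard + 1

theorem exists_isTight_mem [Finite V] {I : Set V} (hI : Maximal G.IndepMG I) {v : V}
    (hv : v ∉ I) :
    ∃ S, G.IsTight I S ∧ v ∈ S := by
  have hdep : G.DepMG (insert v I) := by
    by_contra h
    exact hv (hI.eq_of_subset h (Set.subset_insert v I) ▸ Set.mem_insert v I)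
  obtain ⟨C, hCvI, hC⟩ := hdep
  have hvC : v ∈ C := by
    by_contra hvC
    exact hI.prop ⟨C, fun x hx => (hCvI hx).resolve_left (ne_of_mem_of_not_mem hx hvC), hC⟩
  have hCI : C ∩ I = C \ {v} := Set.ext fun x =>
    ⟨fun ⟨hxC, hxI⟩ => ⟨hxC, by rintro rfl; exact hv hxI⟩,
      fun ⟨hxC, hxv⟩ => ⟨hxC, (hCvI hxC).resolve_left hxv⟩⟩
  refine ⟨C, ⟨hC.1, ?_⟩, hvC⟩
  rw [hCI, Set.ncard_sdiff_singleton_add_one hvC]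
  exact hC.2.1

variable [Finite V] [Fintype E] {I : Set V}

theorem ncard_inter_add_one_le_bondRank_inc (h3 : G.Trivalent) (h2 : G.TwoEdgeConnected)
    (hI : G.IndepMG I) {S : Set V} (hS : S.Nonempty) :
    (S ∩ I).ncard + 1 ≤ G.bondRank (G.inc S) := by
  rcases (S ∩ I).eq_empty_or_nonempty with h | h
  · have := ncard_add_two_le_two_mul_bondRank_inc h3 h2 hS
    rw [h, Set.ncard_empty]
    omega
  · exact (indepMG_iff.1 hI _ Set.inter_subset_right h).trans_le
      (h2.1.bondRank_mono (inc_mono Set.inter_subset_left))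

theorem IsTight.union (h3 : G.Trivalent) (h2 : G.TwoEdgeConnected) (hI : G.IndepMG I)
    {S T : Set V} (hS : G.IsTight I S) (hT : G.IsTight I T) (hST : (S ∩ T).Nonempty) :
    G.IsTight I (S ∪ T) := by
  have hsub := h2.1.bondRank_inc_union_add_inter_le S T
  have hinter := ncard_inter_add_one_le_bondRank_inc h3 h2 hI hST
  have hcard := Set.ncard_union_add_ncard_inter (S ∩ I) (T ∩ I)
  rw [← Set.union_inter_distrib_right, ← Set.inter_inter_distrib_right] at hcard
  have := hS.2
  have := hT.2
  exact ⟨hS.1.mono Set.subset_union_left, by omega⟩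

theorem IsTight.ncard_sdiff_le (h3 : G.Trivalent) (h2 : G.TwoEdgeConnected) {S : Set V}
    (hS : G.IsTight I S) : (S \ I).ncard ≤ (S ∩ I).ncard := by
  have := ncard_add_two_le_two_mul_bondRank_inc h3 h2 hS.1
  have := Set.ncard_inter_add_ncard_sdiff_eq_ncard S I
  have := hS.2
  omega

theorem ncard_compl_le_of_maximal_indepMG (h3 : G.Trivalent) (h2 : G.TwoEdgeConnected)
    (hI : Maximal G.IndepMG I) : Iᶜ.ncard ≤ I.ncard := by
  refine Set.ncard_le_ncard_of_pairwiseDisjoint (𝓜 := {M | Maximal (G.IsTight I) M})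
    ?_ ?_ fun M hM => ?_
  · intro M hM M' hM' hne
    by_contra hMM'
    have hU := hM.prop.union h3 h2 hI.prop hM'.prop (Set.not_disjoint_iff_nonempty_inter.1 hMM')
    exact hne ((hM.eq_of_subset hU Set.subset_union_left).trans
      (hM'.eq_of_subset hU Set.subset_union_right).symm)
  · intro v hv
    obtain ⟨S, hS, hvS⟩ := exists_isTight_mem hI hv
    obtain ⟨M, hSM, hM⟩ := Finite.exists_le_maximal hS
    exact ⟨M, hM, hSM hvS⟩
  · rw [← Set.sdiff_eq]
    exact hM.prop.ncard_sdiff_le h3 h2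

end Multigraph

/-- For a trivalent 2-edge-connected finite graph `G` of genus
`g = |E| - |V| + 1` (so `|V| = 2g - 2` and `|E| = 3g - 3`), the rank of the graph
curve matroid `M_G` is `g - 1`. -/
theorem rankMG_univ_eq {V E : Type*} [Fintype V] [Fintype E]
    (G : Multigraph V E) (h3 : G.Trivalent) (h2 : G.TwoEdgeConnected)
    (g : ℕ) (hg : Nat.card E + 1 = g + Nat.card V) :
    G.rankMG Set.univ + 1 = g := by
  have hV := h3.three_mul_card
  have hbound : ∀ I, G.IndepMG I → I.ncard + 1 ≤ g := fun I hI => by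
    rcases I.eq_empty_or_nonempty with rfl | hne
    · rw [Set.ncard_empty]
      omega
    · have := h2.1.ncard_add_card_le_of_indepMG hI hne
      omega
  obtain ⟨I, -, hI⟩ := Finite.exists_le_maximal (Multigraph.indepMG_empty (G := G))
  have hIc := Multigraph.ncard_compl_le_of_maximal_indepMG h3 h2 hI
  have hcard := Set.ncard_add_ncard_compl I
  have hIg : I.ncard + 1 = g := by
    have := hbound I hI.prop
    omega
  have hgreat : IsGreatest {n | ∃ J ⊆ Set.univ, G.IndepMG J ∧ J.ncard = n} I.ncard :=
    ⟨⟨I, Set.subset_univ I, hI.prop, rfl⟩, fun n ⟨J, _, hJ, hJn⟩ => hJn ▸ by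
      have := hbound J hJ
      omega⟩
  rw [Multigraph.rankMG, hgreat.csSup_eq, hIg]
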